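/- Let X and Y be independent with X ~ exp(1) and Y having density N e^{−y}(1−e^{−y})^{N−1} on [0,∞). Then for any z ≥ 0 and a > 0, P[X ≤ zY, Y ≥ a] = N Σ_{k=0}^{N−1} C(N−1,k)(−1)^k e^{−a(k+1)} [1/(k+1) − e^{−az}/(z+k+1)]. -/

import Mathlib

/-!
Integrating out `X` leaves `∫_{y ≥ a} (1 - e^{-zy}) N e^{-y} (1 - e^{-y})^{N-1} dy`. Expanding
`(1 - e^{-y})^{N-1}` by the binomial theorem turns the integrand into a finite combination of
`e^{-(k+1)y}` and `e^{-(z+k+1)y}`, each of which integrates explicitly over `(a, ∞)`.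
-/

open MeasureTheory Real Finset

theorem integral_exp_neg_Icc_zero {w : ℝ} (hw : 0 ≤ w) :
    ∫ x in Set.Icc (0 : ℝ) w, exp (-x) = 1 - exp (-w) := by
  rw [integral_Icc_eq_integral_Ioc, ← intervalIntegral.integral_of_le hw,
    intervalIntegral.integral_comp_neg (fun x => exp x), integral_exp, neg_zero, exp_zero]

theorem integral_exp_neg_mul_sub_exp_neg_mul_Ioi {c d : ℝ} (hc : 0 < c) (hd : 0 < d) (a : ℝ) :
    ∫ y in Set.Ioi a, (exp (-c * y) - exp (-d * y)) = exp (-c * a) / c - exp (-d * a) / d := by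
  rw [integral_sub (exp_neg_integrableOn_Ioi a hc) (exp_neg_integrableOn_Ioi a hd),
    integral_exp_mul_Ioi (neg_neg_iff_pos.mpr hc), integral_exp_mul_Ioi (neg_neg_iff_pos.mpr hd),
    neg_div_neg_eq, neg_div_neg_eq]

theorem one_sub_exp_neg_pow (n : ℕ) (y : ℝ) :
    (1 - exp (-y)) ^ n = ∑ k ∈ range (n + 1), (n.choose k : ℝ) * (-1) ^ k * exp (-y) ^ k := by
  rw [sub_eq_neg_add, add_pow]
  refine sum_congr rfl fun k _ => ?_
  rw [one_pow, mul_one, neg_pow]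
  ring

theorem one_sub_exp_neg_mul_density_eq_sum (n : ℕ) (z y : ℝ) :
    (1 - exp (-(z * y))) * ((n + 1) * exp (-y) * (1 - exp (-y)) ^ n)
      = (n + 1) * ∑ k ∈ range (n + 1), (n.choose k : ℝ) * (-1) ^ k *
          (exp (-((k : ℝ) + 1) * y) - exp (-(z + (k : ℝ) + 1) * y)) := by
  have hk (k : ℕ) : exp (-((k : ℝ) + 1) * y) = exp (-y) * exp (-y) ^ k := by
    rw [← exp_nat_mul, ← exp_add]; ring_nf
  have hzk (k : ℕ) :
      exp (-(z + (k : ℝ) + 1) * y) = exp (-(z * y)) * (exp (-y) * exp (-y) ^ k) := by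
    rw [← exp_nat_mul, ← exp_add, ← exp_add]; ring_nf
  simp only [hk, hzk, one_sub_exp_neg_pow, mul_sum]
  refine sum_congr rfl fun k _ => ?_
  ring

theorem joint_prob_AP_BSL_general (N : ℕ) (z a : ℝ) (hz : 0 ≤ z) (ha : 0 < a) :
    ∫ y in Set.Ici a,
        (∫ x in Set.Icc (0 : ℝ) (z * y), Real.exp (-x)) *
          ((N : ℝ) * Real.exp (-y) * (1 - Real.exp (-y)) ^ (N - 1))
      = (N : ℝ) * ∑ k ∈ Finset.range N,
          (Nat.choose (N - 1) k : ℝ) * (-1) ^ k * Real.exp (-a * ((k : ℝ) + 1)) *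
            (1 / ((k : ℝ) + 1) - Real.exp (-a * z) / (z + (k : ℝ) + 1)) := by
  cases N with
  | zero => simp
  | succ n =>
    have hk (k : ℕ) : (0 : ℝ) < k + 1 := by positivity
    have hzk (k : ℕ) : 0 < z + k + 1 := by positivity
    push_cast
    calc _ = ∫ y in Set.Ioi a, (n + 1) * ∑ k ∈ range (n + 1), (n.choose k : ℝ) * (-1) ^ k *
            (exp (-((k : ℝ) + 1) * y) - exp (-(z + (k : ℝ) + 1) * y)) := by
          rw [integral_Ici_eq_integral_Ioi]
          refine setIntegral_congr_fun measurableSet_Ioi fun y hy => ?_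
          rw [integral_exp_neg_Icc_zero (mul_nonneg hz (ha.trans hy).le),
            one_sub_exp_neg_mul_density_eq_sum]
      _ = (n + 1) * ∑ k ∈ range (n + 1), (n.choose k : ℝ) * (-1) ^ k *
            (exp (-((k : ℝ) + 1) * a) / (k + 1)
              - exp (-(z + (k : ℝ) + 1) * a) / (z + k + 1)) := by
          rw [integral_const_mul, integral_finsetSum]
          · simp only [integral_const_mul, integral_exp_neg_mul_sub_exp_neg_mul_Ioi (hk _) (hzk _)]
          · exact fun k _ => ((exp_neg_integrableOn_Ioi a (hk k)).sub
              (exp_neg_integrableOn_Ioi a (hzk k))).const_mul _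
      _ = _ := by
          refine congrArg _ (sum_congr rfl fun k _ => ?_)
          rw [show -(z + (k : ℝ) + 1) * a = -a * (k + 1) + -a * z by ring, exp_add]
          field_simp

/-- AP-BSL joint probability (Eq. (79)): X ~ exp(1) independent of Y with density
N e^{−y}(1−e^{−y})^{N−1} on [0,∞); for z ≥ 0 and a > 0,
P[X ≤ zY, Y ≥ a] = N Σ_{k=0}^{N−1} C(N−1,k)(−1)^k e^{−a(k+1)}[1/(k+1) − e^{−az}/(z+k+1)]. -/
theorem joint_prob_AP_BSL (N : ℕ) (hN : 1 ≤ N) (z a : ℝ) (hz : 0 ≤ z) (ha : 0 < a) :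
    ∫ y in Set.Ici a,
        (∫ x in Set.Icc (0 : ℝ) (z * y), Real.exp (-x)) *
          ((N : ℝ) * Real.exp (-y) * (1 - Real.exp (-y)) ^ (N - 1))
      = (N : ℝ) * ∑ k ∈ Finset.range N,
          (Nat.choose (N - 1) k : ℝ) * (-1) ^ k * Real.exp (-a * ((k : ℝ) + 1)) *
            (1 / ((k : ℝ) + 1) - Real.exp (-a * z) / (z + (k : ℝ) + 1)) :=
  joint_prob_AP_BSL_general N z a hz ha
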